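/- Let S be a random variable following the Gamma distribution with integer shape parameter k ≥ 1 and scale parameter θ > 0, and let W be a nonnegative real random variable independent of S, with Laplace transform M(s) = E[e^{−sW/θ}] for s > 0. Then P(S > W) = ∑_{i=0}^{k−1} ((−1)^i / i!) M^{(i)}(1), where M^{(i)} denotes the i-th derivative of M. -/

import Mathlib

open MeasureTheory ProbabilityTheory

open Real Set Filter Topology Finset

lemma pow_mul_exp_neg_le {c t : ℝ} (hc : 0 < c) (ht : 0 ≤ t) (n : ℕ) :
    t ^ n * Real.exp (-(c * t)) ≤ n.factorial / c ^ n := by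
  have h : (c * t) ^ n / n.factorial ≤ Real.exp (c * t) :=
    Real.pow_div_factorial_le_exp (x := c * t) (by positivity) n
  rw [div_le_iff₀ (by positivity : (0:ℝ) < (n.factorial : ℝ))] at h
  rw [Real.exp_neg, ← div_eq_mul_inv, div_le_div_iff₀ (Real.exp_pos _) (by positivity)]
  calc t ^ n * c ^ n = (c * t) ^ n := by rw [mul_pow]; ring
    _ ≤ Real.exp (c * t) * n.factorial := h
    _ = (n.factorial : ℝ) * Real.exp (c * t) := by ring

lemma hasDerivAt_gtail (m : ℕ) (r x : ℝ) :
    HasDerivAt (fun x => ∑ i ∈ Finset.range (m + 1),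
        (r * x) ^ i / i.factorial * Real.exp (-(r * x)))
      (-(r * (r * x) ^ m / m.factorial * Real.exp (-(r * x)))) x := by
  have hrx : HasDerivAt (fun x : ℝ => r * x) r x := by
    simpa using (hasDerivAt_id x).const_mul r
  have hP : HasDerivAt (fun x => ∑ i ∈ Finset.range (m + 1), (r * x) ^ i / i.factorial)
      (r * ∑ i ∈ Finset.range m, (r * x) ^ i / i.factorial) x := by
    have h := HasDerivAt.fun_sum (u := Finset.range (m + 1))
      (fun i _ => (((hasDerivAt_pow i (r * x)).comp x hrx).div_const (i.factorial : ℝ)))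
    refine h.congr_deriv (Eq.symm ?_)
    rw [Finset.sum_range_succ', Finset.mul_sum]
    norm_num
    refine Finset.sum_congr rfl fun i _ => ?_
    rw [Nat.factorial_succ]
    push_cast
    have h1 : (i.factorial : ℝ) ≠ 0 := by positivity
    field_simp
  have hE : HasDerivAt (fun x => Real.exp (-(r * x))) (-r * Real.exp (-(r * x))) x := by
    have := (Real.hasDerivAt_exp (-(r * x))).comp x hrx.neg
    refine this.congr_deriv (Eq.symm ?_)
    ring
  have h := hP.mul hE
  have heq : (fun x => ∑ i ∈ Finset.range (m + 1), (r * x) ^ i / i.factorial * Real.exp (-(r * x)))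
      = fun x => (∑ i ∈ Finset.range (m + 1), (r * x) ^ i / i.factorial) * Real.exp (-(r * x)) := by
    funext y; rw [Finset.sum_mul]
  rw [heq]
  refine h.congr_deriv (Eq.symm ?_)
  rw [Finset.sum_range_succ]
  ring

lemma gamma_tail (m : ℕ) {θ : ℝ} (hθ : 0 < θ) {w : ℝ} (hw : 0 ≤ w) :
    gammaMeasure ((m + 1 : ℕ) : ℝ) θ⁻¹ (Set.Ioi w)
      = ENNReal.ofReal (∑ i ∈ Finset.range (m + 1),
          (θ⁻¹ * w) ^ i / i.factorial * Real.exp (-(θ⁻¹ * w))) := by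
  set r : ℝ := θ⁻¹ with hr_def
  have hr : 0 < r := by positivity
  set G : ℝ → ℝ := fun x => ∑ i ∈ Finset.range (m + 1),
      (r * x) ^ i / i.factorial * Real.exp (-(r * x)) with hG
  set g : ℝ → ℝ := fun x => r ^ (m + 1) * x ^ m * Real.exp (-(r * x)) / m.factorial with hg
  have hgc : Continuous g := by fun_prop
  have hderiv : ∀ x : ℝ, HasDerivAt (fun x => -G x) (g x) x := by
    intro x
    have h := (hasDerivAt_gtail m r x).neg
    refine h.congr_deriv (Eq.symm ?_)
    simp only [hg, mul_pow]
    ring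
  have hint : ∀ a b : ℝ, ∫ x in a..b, g x = G a - G b := by
    intro a b
    rw [intervalIntegral.integral_eq_sub_of_hasDerivAt (fun x _ => hderiv x)
      (hgc.intervalIntegrable a b)]
    ring
  have hG0 : G 0 = 1 := by
    show (∑ i ∈ Finset.range (m + 1), (r * 0) ^ i / i.factorial * Real.exp (-(r * 0))) = 1
    rw [Finset.sum_eq_single_of_mem 0 (Finset.mem_range.2 (Nat.succ_pos m))
      (fun i _ hi => by simp [zero_pow hi])]
    simp
  haveI : IsProbabilityMeasure (gammaMeasure ((m + 1 : ℕ) : ℝ) r) :=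
    isProbabilityMeasure_gammaMeasure (by positivity) hr
  have hIic : gammaMeasure ((m + 1 : ℕ) : ℝ) r (Set.Iic w) = ENNReal.ofReal (1 - G w) := by
    rw [gammaMeasure, withDensity_apply _ measurableSet_Iic,
      lintegral_Iic_eq_lintegral_Iio_add_Icc _ hw, lintegral_gammaPDF_of_nonpos le_rfl, zero_add]
    have hcongr : ∫⁻ x in Set.Icc 0 w, gammaPDF ((m + 1 : ℕ) : ℝ) r x
        = ∫⁻ x in Set.Icc 0 w, ENNReal.ofReal (g x) := by
      apply setLIntegral_congr_fun measurableSet_Icc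
      intro x hx
      rw [gammaPDF_of_nonneg hx.1]
      congr 1
      have h1 : r ^ ((m + 1 : ℕ) : ℝ) = r ^ (m + 1) := Real.rpow_natCast r (m + 1)
      have h2 : Real.Gamma ((m + 1 : ℕ) : ℝ) = m.factorial := by
        rw [show ((m + 1 : ℕ) : ℝ) = (m : ℝ) + 1 by push_cast; ring]
        exact Real.Gamma_nat_eq_factorial m
      have h3 : x ^ (((m + 1 : ℕ) : ℝ) - 1) = x ^ (m : ℕ) := by
        rw [show ((m + 1 : ℕ) : ℝ) - 1 = ((m : ℕ) : ℝ) by push_cast; ring]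
        exact Real.rpow_natCast x m
      rw [h1, h2, h3, hg]
      ring
    rw [hcongr, ← ofReal_integral_eq_lintegral_ofReal (hgc.integrableOn_Icc)
      ((ae_restrict_iff' measurableSet_Icc).mpr (ae_of_all _ fun x hx => by
        have hx0 : 0 ≤ x := hx.1
        have : (0:ℝ) ≤ r ^ (m+1) * x ^ m * Real.exp (-(r * x)) / m.factorial := by positivity
        simpa [hg] using this))]
    congr 1
    rw [MeasureTheory.integral_Icc_eq_integral_Ioc, ← intervalIntegral.integral_of_le hw,
      hint 0 w, hG0]
  have h01 : (0:ℝ) ≤ 1 - G w := by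
    have h := hint 0 w
    have hnn : 0 ≤ ∫ x in (0:ℝ)..w, g x := by
      apply intervalIntegral.integral_nonneg hw
      intro x hx
      have hx0 : (0:ℝ) ≤ x := hx.1
      rw [hg]
      positivity
    rw [h, hG0] at hnn
    linarith
  have hGw0 : 0 ≤ G w := by
    apply Finset.sum_nonneg
    intro i _
    have hrw : 0 ≤ r * w := mul_nonneg hr.le hw
    exact mul_nonneg (div_nonneg (pow_nonneg hrw i) (by positivity)) (Real.exp_pos _).le
  rw [show Set.Ioi w = (Set.Iic w)ᶜ from Set.compl_Iic.symm,
    measure_compl measurableSet_Iic (measure_ne_top _ _), hIic, measure_univ,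
    ← ENNReal.ofReal_one, ← ENNReal.ofReal_sub 1 h01]
  congr 1
  ring

lemma hasDerivAt_laplace_aux {Ω : Type*} [MeasureSpace Ω] [IsProbabilityMeasure (ℙ : Measure Ω)]
    {W : Ω → ℝ} (hW : Measurable W) (hWnn : ∀ ω, 0 ≤ W ω) {θ : ℝ} (hθ : 0 < θ)
    (n : ℕ) {s : ℝ} (hs : 0 < s) :
    HasDerivAt (fun s => ∫ ω, (-(W ω) / θ) ^ n * Real.exp (-s * W ω / θ))
      (∫ ω, (-(W ω) / θ) ^ (n + 1) * Real.exp (-s * W ω / θ)) s := by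
  have meas : ∀ (j : ℕ) (x : ℝ), AEStronglyMeasurable
      (fun ω => (-(W ω) / θ) ^ j * Real.exp (-x * W ω / θ)) ℙ := by
    intro j x
    apply Measurable.aestronglyMeasurable
    fun_prop
  have hnorm : ∀ (j : ℕ) (x : ℝ) (ω : Ω), ‖(-(W ω) / θ) ^ j * Real.exp (-x * W ω / θ)‖
      = (W ω / θ) ^ j * Real.exp (-(x * (W ω / θ))) := by
    intro j x ω
    rw [norm_mul, norm_pow, Real.norm_eq_abs, Real.norm_eq_abs, Real.abs_exp,
      abs_div, abs_neg, abs_of_nonneg (hWnn ω), abs_of_pos hθ]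
    congr 2
    ring
  have hb : ∀ (j : ℕ) {c : ℝ} (hc : 0 < c) (ω : Ω),
      (W ω / θ) ^ j * Real.exp (-(c * (W ω / θ))) ≤ j.factorial / c ^ j :=
    fun j c hc ω => pow_mul_exp_neg_le hc (div_nonneg (hWnn ω) hθ.le) j
  have hint : ∀ (j : ℕ) {x : ℝ}, 0 < x →
      Integrable (fun ω => (-(W ω) / θ) ^ j * Real.exp (-x * W ω / θ)) ℙ := by
    intro j x hx
    refine Integrable.mono' (integrable_const ((j.factorial : ℝ) / x ^ j)) (meas j x)
      (ae_of_all _ fun ω => ?_)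
    rw [hnorm]
    exact hb j hx ω
  refine (hasDerivAt_integral_of_dominated_loc_of_deriv_le
    (F := fun x ω => (-(W ω) / θ) ^ n * Real.exp (-x * W ω / θ))
    (F' := fun x ω => (-(W ω) / θ) ^ (n + 1) * Real.exp (-x * W ω / θ))
    (bound := fun _ => ((n + 1).factorial : ℝ) / (s / 2) ^ (n + 1))
    (Metric.ball_mem_nhds s (half_pos hs)) (.of_forall fun x => meas n x) (hint n hs) (meas (n + 1) s) ?_
    (integrable_const _) ?_).2
  · refine ae_of_all _ fun ω x hx => ?_
    rw [hnorm]
    have hx2 : s / 2 ≤ x := by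
      rw [Metric.mem_ball, Real.dist_eq, abs_sub_lt_iff] at hx
      linarith [hx.2]
    calc (W ω / θ) ^ (n + 1) * Real.exp (-(x * (W ω / θ)))
        ≤ (W ω / θ) ^ (n + 1) * Real.exp (-(s / 2 * (W ω / θ))) := by
          apply mul_le_mul_of_nonneg_left _ (pow_nonneg (div_nonneg (hWnn ω) hθ.le) _)
          apply Real.exp_le_exp.mpr
          have h0 : 0 ≤ W ω / θ := div_nonneg (hWnn ω) hθ.le
          nlinarith
      _ ≤ _ := hb (n + 1) (half_pos hs) ω
  · refine ae_of_all _ fun ω x _ => ?_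
    have h1 : HasDerivAt (fun x : ℝ => -x * W ω / θ) (-(W ω) / θ) x := by
      have h := hasDerivAt_mul_const (x := x) (-(W ω) / θ)
      exact h.congr_of_eventuallyEq (Filter.Eventually.of_forall fun y => by ring)
    have h3 := h1.exp.const_mul ((-(W ω) / θ) ^ n)
    refine h3.congr_deriv (Eq.symm ?_)
    show (-W ω / θ) ^ (n + 1) * Real.exp (-x * W ω / θ) = _
    rw [pow_succ]
    ring

lemma iteratedDeriv_laplace {Ω : Type*} [MeasureSpace Ω] [IsProbabilityMeasure (ℙ : Measure Ω)]
    {W : Ω → ℝ} (hW : Measurable W) (hWnn : ∀ ω, 0 ≤ W ω) {θ : ℝ} (hθ : 0 < θ)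
    (n : ℕ) : ∀ s ∈ Set.Ioi (0:ℝ),
    iteratedDeriv n (fun s => ∫ ω, Real.exp (-s * W ω / θ)) s
      = ∫ ω, (-(W ω) / θ) ^ n * Real.exp (-s * W ω / θ) := by
  induction n with
  | zero =>
    intro s _
    rw [iteratedDeriv_zero]
    simp only [pow_zero, one_mul]
  | succ n ih =>
    intro s hs
    rw [iteratedDeriv_succ]
    have heq : iteratedDeriv n (fun s => ∫ ω, Real.exp (-s * W ω / θ))
        =ᶠ[nhds s] fun s => ∫ ω, (-(W ω) / θ) ^ n * Real.exp (-s * W ω / θ) :=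
      Filter.eventually_of_mem (isOpen_Ioi.mem_nhds hs) ih
    rw [heq.deriv_eq]
    exact (hasDerivAt_laplace_aux hW hWnn hθ n hs).deriv

/-- Let `S ~ Gamma(k, θ)` with integer shape `k ≥ 1` and scale `θ > 0`, and let `W` be a
nonnegative real random variable independent of `S`, with Laplace transform
`M(s) = E[e^(−sW/θ)]`. Then `P(S > W) = ∑_{i=0}^{k−1} ((−1)^i / i!) M^(i)(1)`. -/
theorem coverage_probability_laplace {Ω : Type*} [MeasureSpace Ω]
    [IsProbabilityMeasure (ℙ : Measure Ω)]
    (k : ℕ) (hk : 1 ≤ k) (θ : ℝ) (hθ : 0 < θ)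
    (S W : Ω → ℝ) (hS : Measurable S) (hW : Measurable W)
    (hWnn : ∀ ω, 0 ≤ W ω)
    (hindep : IndepFun S W ℙ)
    (hSd : Measure.map S ℙ = gammaMeasure (k : ℝ) θ⁻¹) :
    (ℙ {ω | W ω < S ω}).toReal =
      ∑ i ∈ Finset.range k, (-1 : ℝ) ^ i / (Nat.factorial i) *
        iteratedDeriv i (fun s => ∫ ω, Real.exp (-s * W ω / θ) ∂ℙ) 1 := by
  obtain ⟨m, rfl⟩ : ∃ m, k = m + 1 := ⟨k - 1, (Nat.succ_pred_eq_of_pos hk).symm⟩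
  set G : ℝ → ℝ := fun w => ∑ i ∈ Finset.range (m + 1),
      (θ⁻¹ * w) ^ i / i.factorial * Real.exp (-(θ⁻¹ * w)) with hGdef
  haveI : IsProbabilityMeasure (Measure.map W ℙ) := Measure.isProbabilityMeasure_map hW.aemeasurable
  have hset : MeasurableSet {p : ℝ × ℝ | p.2 < p.1} :=
    measurableSet_lt measurable_snd measurable_fst
  have hae : ∀ᵐ w ∂(Measure.map W ℙ), 0 ≤ w := by
    refine (ae_map_iff hW.aemeasurable measurableSet_Ici).mpr (ae_of_all _ hWnn)
  have hGnn : ∀ {w : ℝ}, 0 ≤ w → 0 ≤ G w := by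
    intro w hw
    apply Finset.sum_nonneg
    intro i _
    have hrw : 0 ≤ θ⁻¹ * w := mul_nonneg (by positivity) hw
    exact mul_nonneg (div_nonneg (pow_nonneg hrw i) (by positivity)) (Real.exp_pos _).le
  have hGc : Continuous G := by
    apply continuous_finset_sum
    intro i _
    fun_prop
  -- Step 1 : independence + Fubini
  have h1 : ℙ {ω | W ω < S ω} = ∫⁻ w, ENNReal.ofReal (G w) ∂(Measure.map W ℙ) := by
    have e1 : {ω | W ω < S ω} = (fun ω => (S ω, W ω)) ⁻¹' {p : ℝ × ℝ | p.2 < p.1} := rfl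
    rw [e1, ← Measure.map_apply (hS.prodMk hW) hset,
      (indepFun_iff_map_prod_eq_prod_map_map hS.aemeasurable hW.aemeasurable).mp hindep,
      Measure.prod_apply_symm hset, hSd]
    refine lintegral_congr_ae (hae.mono fun w hw => ?_)
    show (gammaMeasure ((m + 1 : ℕ) : ℝ) θ⁻¹) ((fun x => (x, w)) ⁻¹' {p : ℝ × ℝ | p.2 < p.1})
      = ENNReal.ofReal (G w)
    rw [show (fun x => (x, w)) ⁻¹' {p : ℝ × ℝ | p.2 < p.1} = Set.Ioi w from rfl,
      gamma_tail m hθ hw]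
  -- Step 2 : turn into a Bochner integral over Ω
  have h2 : (ℙ {ω | W ω < S ω}).toReal = ∫ ω, G (W ω) ∂ℙ := by
    rw [h1, ← integral_map hW.aemeasurable hGc.aestronglyMeasurable,
      integral_eq_lintegral_of_nonneg_ae (hae.mono fun w hw => hGnn hw)
        hGc.aestronglyMeasurable]
  -- integrability of each summand
  have hint : ∀ i : ℕ, Integrable
      (fun ω => (θ⁻¹ * W ω) ^ i / i.factorial * Real.exp (-(θ⁻¹ * W ω))) ℙ := by
    intro i
    refine Integrable.mono' (integrable_const 1) (Measurable.aestronglyMeasurable (by fun_prop)) (ae_of_all _ fun ω => ?_)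
    have ht : 0 ≤ θ⁻¹ * W ω := mul_nonneg (by positivity) (hWnn ω)
    have h := Real.pow_div_factorial_le_exp (x := θ⁻¹ * W ω) ht i
    rw [Real.norm_eq_abs, abs_of_nonneg (mul_nonneg (div_nonneg (pow_nonneg ht i)
      (by positivity)) (Real.exp_pos _).le)]
    calc (θ⁻¹ * W ω) ^ i / i.factorial * Real.exp (-(θ⁻¹ * W ω))
        ≤ Real.exp (θ⁻¹ * W ω) * Real.exp (-(θ⁻¹ * W ω)) :=
          mul_le_mul_of_nonneg_right h (Real.exp_pos _).le
      _ = 1 := by rw [← Real.exp_add, add_neg_cancel, Real.exp_zero]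
  -- Step 3 : swap sum and integral
  have h3 : ∫ ω, G (W ω) ∂ℙ = ∑ i ∈ Finset.range (m + 1),
      ∫ ω, (θ⁻¹ * W ω) ^ i / i.factorial * Real.exp (-(θ⁻¹ * W ω)) ∂ℙ :=
    integral_finset_sum _ fun i _ => hint i
  -- Step 4 : identify each term with an iterated derivative
  have h4 : ∀ i : ℕ, (-1 : ℝ) ^ i / (Nat.factorial i) *
      iteratedDeriv i (fun s => ∫ ω, Real.exp (-s * W ω / θ) ∂ℙ) 1
      = ∫ ω, (θ⁻¹ * W ω) ^ i / i.factorial * Real.exp (-(θ⁻¹ * W ω)) ∂ℙ := by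
    intro i
    rw [iteratedDeriv_laplace hW hWnn hθ i 1 (Set.mem_Ioi.mpr one_pos), ← integral_const_mul]
    refine integral_congr_ae (ae_of_all _ fun ω => ?_)
    show (-1 : ℝ) ^ i / (i.factorial : ℝ) * ((-(W ω) / θ) ^ i * Real.exp (-1 * W ω / θ))
      = (θ⁻¹ * W ω) ^ i / (i.factorial : ℝ) * Real.exp (-(θ⁻¹ * W ω))
    have e : -1 * W ω / θ = -(θ⁻¹ * W ω) := by ring
    rw [e]
    have key : ((-1 : ℝ)) ^ i * (-(W ω) / θ) ^ i = (θ⁻¹ * W ω) ^ i := by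
      rw [← mul_pow]
      congr 1
      ring
    linear_combination (Real.exp (-(θ⁻¹ * W ω)) / (i.factorial : ℝ)) * key
  rw [h2, h3]
  exact (Finset.sum_congr rfl fun i _ => h4 i).symm
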